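/- Suppose a < q < b in [0,1] with ūA(y) > ūB(y) for all y ∈ (a, q) and ūB(y) > ūA(y) for all y ∈ (q, b). Then every Carathéodory solution x of the continuous-time imitation population dynamics with x(0) in the interior of 𝒳_s and σ(x(0)) ∈ (a, b) satisfies x(t) → qρ as t → ∞. -/

import Mathlib

open scoped Classical
open MeasureTheory Filter Set

/-- The state space `ℝ^p`, with the Euclidean norm. -/
abbrev Vec (p : ℕ) := EuclideanSpace ℝ (Fin p)

/-- Maximum of finitely many polynomial utilities at `y`. -/
noncomputable def ubar {p : ℕ} (u : Fin p → Polynomial ℝ) (y : ℝ) : ℝ :=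
  ⨆ i, (u i).eval y

/-- The total proportion of `A`-players: `σ(x) = Σ_i x_i`. -/
noncomputable def sigma' {p : ℕ} (x : Vec p) : ℝ := ∑ i, x i

/-- The state space `𝒳_s = ∏_i [0, ρ_i]`. -/
def Xs {p : ℕ} (ρ : Vec p) : Set (Vec p) := {x | ∀ i, x i ∈ Set.Icc 0 (ρ i)}

/-- The set-valued map of the continuous-time imitation population dynamics. -/
noncomputable def Vmap {p : ℕ} (ρ : Vec p) (uA uB : Fin p → Polynomial ℝ)
    (x : Vec p) : Set (Vec p) :=
  if x ∈ interior (Xs ρ) ∧ ubar uB (sigma' x) < ubar uA (sigma' x) then {ρ - x}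
  else if x ∈ interior (Xs ρ) ∧ ubar uA (sigma' x) < ubar uB (sigma' x) then {-x}
  else segment ℝ (ρ - x) (-x)

/-- A Carathéodory solution of the continuous-time imitation population dynamics on `[0,∞)`:
a locally absolutely continuous `𝒳_s`-valued function whose derivative lies in `Vmap`
almost everywhere, expressed in integral form. -/
def IsPopSol {p : ℕ} (ρ : Vec p) (uA uB : Fin p → Polynomial ℝ) (x : ℝ → Vec p) : Prop :=
  (∀ t, 0 ≤ t → x t ∈ Xs ρ) ∧
  ∃ v : ℝ → Vec p,
    (∀ᵐ t ∂(MeasureTheory.volume.restrict (Set.Ici (0:ℝ))), v t ∈ Vmap ρ uA uB (x t)) ∧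
    (∀ t, 0 ≤ t → IntervalIntegrable v MeasureTheory.volume 0 t) ∧
    (∀ t, 0 ≤ t → x t = x 0 + ∫ s in (0:ℝ)..t, v s)


/-!
Every admissible velocity is `θ ρ - x` with `θ ∈ [0, 1]`. Since `σ(ρ) = 1`, the component
`x - σ(x) ρ` transverse to `ρ` solves `y' = -y` and decays like `e^{-t}`, whatever `θ` is, while
`σ(x)` solves `σ' = θ - σ`. Comparison with `y' = -y` keeps each coordinate of `x` strictly
inside `(0, ρ_i)`, so the dynamics is `σ' = 1 - σ ≥ 1 - q` on the strip `a < σ < q` and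
`σ' = -σ ≤ -q` on `q < σ < b`. A scalar trapping argument gives `σ(x(t)) → q`, hence
`x(t) → q ρ`.
-/

open Real Topology

theorem hasDerivAt_intervalIntegral_of_continuousOn_Ici {E : Type*} [NormedAddCommGroup E]
    [NormedSpace ℝ E] [CompleteSpace E] {f : ℝ → E} (hf : ContinuousOn f (Ici 0)) {t : ℝ}
    (ht : 0 < t) : HasDerivAt (fun u => ∫ τ in (0:ℝ)..u, f τ) (f t) t :=
  intervalIntegral.integral_hasDerivAt_right
    ((hf.mono Icc_subset_Ici_self).intervalIntegrable_of_Icc ht.le)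
    ((hf.mono Ioi_subset_Ici_self).stronglyMeasurableAtFilter isOpen_Ioi t ht)
    (hf.continuousAt (Ici_mem_nhds ht))

structure IsPrimitiveOnIci {E : Type*} [NormedAddCommGroup E] [NormedSpace ℝ E]
    (f g : ℝ → E) : Prop where
  intervalIntegrable : ∀ t, 0 ≤ t → IntervalIntegrable g volume 0 t
  eq_add_integral : ∀ t, 0 ≤ t → f t = f 0 + ∫ τ in (0:ℝ)..t, g τ

namespace IsPrimitiveOnIci

section NormedSpace

variable {E F : Type*} [NormedAddCommGroup E] [NormedSpace ℝ E] [NormedAddCommGroup F]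
  [NormedSpace ℝ F] {f f' g g' : ℝ → E}

theorem map [CompleteSpace E] [CompleteSpace F] (hf : IsPrimitiveOnIci f g) (L : E →L[ℝ] F) :
    IsPrimitiveOnIci (fun t => L (f t)) (fun t => L (g t)) where
  intervalIntegrable t ht :=
    ⟨L.integrable_comp (hf.intervalIntegrable t ht).1,
      L.integrable_comp (hf.intervalIntegrable t ht).2⟩
  eq_add_integral t ht := by
    rw [hf.eq_add_integral t ht, map_add,
      ← L.intervalIntegral_comp_comm (hf.intervalIntegrable t ht)]

theorem add (hf : IsPrimitiveOnIci f g) (hf' : IsPrimitiveOnIci f' g') :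
    IsPrimitiveOnIci (fun t => f t + f' t) (fun t => g t + g' t) where
  intervalIntegrable t ht := (hf.intervalIntegrable t ht).add (hf'.intervalIntegrable t ht)
  eq_add_integral t ht := by
    rw [hf.eq_add_integral t ht, hf'.eq_add_integral t ht,
      intervalIntegral.integral_add (hf.intervalIntegrable t ht) (hf'.intervalIntegrable t ht)]
    abel

theorem sub (hf : IsPrimitiveOnIci f g) (hf' : IsPrimitiveOnIci f' g') :
    IsPrimitiveOnIci (fun t => f t - f' t) (fun t => g t - g' t) where
  intervalIntegrable t ht := (hf.intervalIntegrable t ht).sub (hf'.intervalIntegrable t ht)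
  eq_add_integral t ht := by
    rw [hf.eq_add_integral t ht, hf'.eq_add_integral t ht,
      intervalIntegral.integral_sub (hf.intervalIntegrable t ht) (hf'.intervalIntegrable t ht)]
    abel

theorem neg (hf : IsPrimitiveOnIci f g) : IsPrimitiveOnIci (fun t => -f t) (fun t => -g t) where
  intervalIntegrable t ht := (hf.intervalIntegrable t ht).neg
  eq_add_integral t ht := by
    rw [hf.eq_add_integral t ht, intervalIntegral.integral_neg, neg_add]

theorem const_sub (hf : IsPrimitiveOnIci f g) (c : E) :
    IsPrimitiveOnIci (fun t => c - f t) (fun t => -g t) where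
  intervalIntegrable t ht := (hf.intervalIntegrable t ht).neg
  eq_add_integral t ht := by
    rw [hf.eq_add_integral t ht, intervalIntegral.integral_neg]
    abel

theorem smul_const [CompleteSpace E] {f g : ℝ → ℝ} (hf : IsPrimitiveOnIci f g) (c : E) :
    IsPrimitiveOnIci (fun t => f t • c) (fun t => g t • c) :=
  hf.map (ContinuousLinearMap.toSpanSingleton ℝ c)

theorem integral_of_continuousOn [CompleteSpace E] (hf : ContinuousOn f (Ici 0)) :
    IsPrimitiveOnIci (fun t => ∫ τ in (0:ℝ)..t, f τ) f where
  intervalIntegrable _ ht := (hf.mono Icc_subset_Ici_self).intervalIntegrable_of_Icc ht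
  eq_add_integral _ _ := by rw [intervalIntegral.integral_same, zero_add]

theorem intervalIntegrable_of_nonneg (hf : IsPrimitiveOnIci f g) {t₁ t₂ : ℝ} (ht₁ : 0 ≤ t₁)
    (ht₂ : 0 ≤ t₂) : IntervalIntegrable g volume t₁ t₂ :=
  (hf.intervalIntegrable t₁ ht₁).symm.trans (hf.intervalIntegrable t₂ ht₂)

theorem sub_eq_integral (hf : IsPrimitiveOnIci f g) {t₁ t₂ : ℝ} (ht₁ : 0 ≤ t₁) (ht₂ : 0 ≤ t₂) :
    f t₂ - f t₁ = ∫ τ in t₁..t₂, g τ := by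
  rw [hf.eq_add_integral t₂ ht₂, hf.eq_add_integral t₁ ht₁, add_sub_add_left_eq_sub,
    intervalIntegral.integral_interval_sub_left (hf.intervalIntegrable t₂ ht₂)
      (hf.intervalIntegrable t₁ ht₁)]

theorem continuousOn (hf : IsPrimitiveOnIci f g) : ContinuousOn f (Ici 0) := by
  intro t ht
  have hT : (0:ℝ) ≤ t + 1 := by linarith [mem_Ici.1 ht]
  have hprim : ContinuousOn (fun u => ∫ τ in (0:ℝ)..u, g τ) (Icc 0 (t + 1)) := by
    simpa [uIcc_of_le hT] using intervalIntegral.continuousOn_primitive_interval'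
      (hf.intervalIntegrable _ hT) left_mem_uIcc
  have hnhds : Icc 0 (t + 1) ∈ 𝓝[Ici 0] t := by
    rw [← Ici_inter_Iic]
    exact inter_mem_nhdsWithin _ (Iic_mem_nhds (by linarith))
  exact (((continuousOn_const.add hprim).congr fun u hu => hf.eq_add_integral u hu.1) t
    ⟨ht, by linarith⟩).mono_of_mem_nhdsWithin hnhds

theorem eqOn_exp_neg_smul [CompleteSpace E] (hf : IsPrimitiveOnIci f g)
    (hg : ∀ᵐ t ∂volume.restrict (Ici 0), g t = -f t) :
    EqOn f (fun t => exp (-t) • f 0) (Ici 0) := by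
  have hfc := hf.continuousOn
  have hfeq : ∀ t, 0 ≤ t → f t = f 0 - ∫ τ in (0:ℝ)..t, f τ := by
    intro t ht
    rw [hf.eq_add_integral t ht, sub_eq_add_neg, ← intervalIntegral.integral_neg]
    congr 1
    refine intervalIntegral.integral_congr_ae ?_
    filter_upwards [(ae_restrict_iff' measurableSet_Ici).1 hg] with τ hτ hmem
    rw [uIoc_of_le ht] at hmem
    exact hτ hmem.1.le
  have hderiv : ∀ τ, 0 < τ → HasDerivAt f (-f τ) τ := fun τ hτ =>
    ((hasDerivAt_intervalIntegral_of_continuousOn_Ici hfc hτ).const_sub (f 0)).congr_of_eventuallyEq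
      (eventually_of_mem (Ioi_mem_nhds hτ) fun s hs => hfeq s (le_of_lt hs))
  intro t ht
  have hconst := intervalIntegral.integral_eq_sub_of_hasDeriv_right_of_le
    (f := fun τ => exp τ • f τ) (f' := fun _ => 0) ht
    (continuous_exp.continuousOn.smul (hfc.mono Icc_subset_Ici_self))
    (fun τ hτ => ((hasDerivAt_exp τ).smul (hderiv τ hτ.1)).hasDerivWithinAt.congr_deriv (by simp))
    intervalIntegrable_const
  rw [intervalIntegral.integral_zero, exp_zero, one_smul, eq_comm, sub_eq_zero] at hconst
  show f t = exp (-t) • f 0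
  rw [← hconst, smul_smul, ← exp_add, neg_add_cancel, exp_zero, one_smul]

end NormedSpace

section Real

variable {f g : ℝ → ℝ}

theorem mul_sub_le_sub_of_ae_le (hf : IsPrimitiveOnIci f g) {δ t₁ t₂ : ℝ} (ht₁ : 0 ≤ t₁)
    (h : t₁ ≤ t₂) (hg : ∀ᵐ t ∂volume.restrict (Ioo t₁ t₂), δ ≤ g t) :
    δ * (t₂ - t₁) ≤ f t₂ - f t₁ := by
  rw [Measure.restrict_congr_set Ioo_ae_eq_Icc] at hg
  have := intervalIntegral.integral_mono_ae_restrict h intervalIntegrable_const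
    (hf.intervalIntegrable_of_nonneg ht₁ (ht₁.trans h)) hg
  rwa [intervalIntegral.integral_const, smul_eq_mul, mul_comm,
    ← hf.sub_eq_integral ht₁ (ht₁.trans h)] at this

theorem le_of_ae_nonneg (hf : IsPrimitiveOnIci f g) {t₁ t₂ : ℝ} (ht₁ : 0 ≤ t₁) (h : t₁ ≤ t₂)
    (hg : ∀ᵐ t ∂volume.restrict (Ioo t₁ t₂), 0 ≤ g t) : f t₁ ≤ f t₂ := by
  linarith [hf.mul_sub_le_sub_of_ae_le ht₁ h hg]

theorem monotoneOn_of_ae_nonneg (hf : IsPrimitiveOnIci f g)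
    (hg : ∀ᵐ t ∂volume.restrict (Ici 0), 0 ≤ g t) : MonotoneOn f (Ici 0) :=
  fun _ ht₁ _ _ h => hf.le_of_ae_nonneg ht₁ h
    (ae_restrict_of_ae_restrict_of_subset (fun _ ht => le_of_lt (lt_of_le_of_lt ht₁ ht.1)) hg)

/-- `f` need not be differentiable, so the argument goes through `G = f + ∫₀ᵗ f`, which is
nondecreasing, and the `C¹` function `u = ∫₀ᵗ f`, for which `(eᵗ u)' = eᵗ G`; then
`e^{t₂} f(t₂) - e^{t₁} f(t₁) = e^{t₂} G(t₂) - e^{t₁} G(t₁) - ∫ eᵗ G ≥ e^{t₁} (G(t₂) - G(t₁))`. -/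
theorem monotoneOn_exp_mul (hf : IsPrimitiveOnIci f g)
    (hg : ∀ᵐ t ∂volume.restrict (Ici 0), -f t ≤ g t) :
    MonotoneOn (fun t => exp t * f t) (Ici 0) := by
  have hfc := hf.continuousOn
  set u : ℝ → ℝ := fun t => ∫ τ in (0:ℝ)..t, f τ
  have hu := integral_of_continuousOn hfc
  have hG := hf.add hu
  have hGmono := hG.monotoneOn_of_ae_nonneg (hg.mono fun t h => by linarith)
  intro t₁ ht₁ t₂ ht₂ h
  have hIcc : Icc t₁ t₂ ⊆ Ici 0 := fun t ht => le_trans ht₁ ht.1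
  have hexpG : IntervalIntegrable (fun τ => exp τ * (f τ + u τ)) volume t₁ t₂ :=
    (continuous_exp.continuousOn.mul (hG.continuousOn.mono hIcc)).intervalIntegrable_of_Icc h
  have hexpu : exp t₂ * u t₂ - exp t₁ * u t₁ = ∫ τ in t₁..t₂, exp τ * (f τ + u τ) := by
    refine (intervalIntegral.integral_eq_sub_of_hasDeriv_right_of_le (f := fun t => exp t * u t)
      h (continuous_exp.continuousOn.mul (hu.continuousOn.mono hIcc)) (fun τ hτ => ?_) hexpG).symm
    exact ((hasDerivAt_exp τ).mul (hasDerivAt_intervalIntegral_of_continuousOn_Ici hfc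
      (ht₁.trans_lt hτ.1))).hasDerivWithinAt.congr_deriv (by ring)
  have hle : ∫ τ in t₁..t₂, exp τ * (f τ + u τ) ≤ ∫ τ in t₁..t₂, exp τ * (f t₂ + u t₂) :=
    intervalIntegral.integral_mono_on h hexpG
      ((continuous_exp.mul continuous_const).intervalIntegrable _ _) fun τ hτ =>
        mul_le_mul_of_nonneg_left (hGmono (hIcc hτ) ht₂ hτ.2) (exp_pos τ).le
  rw [intervalIntegral.integral_mul_const, integral_exp] at hle
  have hGt := mul_le_mul_of_nonneg_left (hGmono ht₁ ht₂ h) (exp_pos t₁).le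
  show exp t₁ * f t₁ ≤ exp t₂ * f t₂
  linarith

theorem pos_of_neg_le (hf : IsPrimitiveOnIci f g) (hg : ∀ᵐ t ∂volume.restrict (Ici 0), -f t ≤ g t)
    (h₀ : 0 < f 0) {t : ℝ} (ht : 0 ≤ t) : 0 < f t := by
  have := hf.monotoneOn_exp_mul hg self_mem_Ici ht ht
  simp only [exp_zero, one_mul] at this
  exact pos_of_mul_pos_right (h₀.trans_le this) (exp_pos t).le

end Real

end IsPrimitiveOnIci

theorem ContinuousOn.exists_downcrossing {s : ℝ → ℝ} {t₁ t₂ l₁ l₂ : ℝ}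
    (hs : ContinuousOn s (Icc t₁ t₂)) (h : t₁ ≤ t₂) (hl : l₁ < l₂) (h₁ : l₂ ≤ s t₁)
    (h₂ : s t₂ ≤ l₁) :
    ∃ T₁ T₂, t₁ ≤ T₁ ∧ T₁ < T₂ ∧ T₂ ≤ t₂ ∧ l₂ ≤ s T₁ ∧ s T₂ ≤ l₁ ∧
      MapsTo s (Ioo T₁ T₂) (Ioo l₁ l₂) := by
  obtain ⟨T₁, ⟨hT₁, hsT₁⟩, hT₁max⟩ :=
    (isCompact_Icc.of_isClosed_subset (hs.preimage_isClosed_of_isClosed isClosed_Icc isClosed_Ici)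
      inter_subset_left).exists_isGreatest ⟨t₁, ⟨le_rfl, h⟩, h₁⟩
  have hT₁t₂ : T₁ < t₂ := hT₁.2.lt_of_ne fun hT => by
    rw [hT] at hsT₁; linarith [show l₂ ≤ s t₂ from hsT₁]
  have hs' : ContinuousOn s (Icc T₁ t₂) := hs.mono (Icc_subset_Icc_left hT₁.1)
  obtain ⟨T₂, ⟨hT₂, hsT₂⟩, hT₂min⟩ :=
    (isCompact_Icc.of_isClosed_subset (hs'.preimage_isClosed_of_isClosed isClosed_Icc isClosed_Iic)
      inter_subset_left).exists_isLeast ⟨t₂, ⟨hT₁t₂.le, le_rfl⟩, h₂⟩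
  have hT₁T₂ : T₁ < T₂ := hT₂.1.lt_of_ne fun hT => by
    rw [← hT] at hsT₂; linarith [show l₂ ≤ s T₁ from hsT₁, show s T₁ ≤ l₁ from hsT₂]
  refine ⟨T₁, T₂, hT₁.1, hT₁T₂, hT₂.2, hsT₁, hsT₂, fun t ht => ⟨?_, ?_⟩⟩
  · by_contra! hle
    exact (hT₂min ⟨⟨ht.1.le, ht.2.le.trans hT₂.2⟩, hle⟩).not_gt ht.2
  · by_contra! hle
    exact (hT₁max ⟨⟨hT₁.1.trans ht.1.le, ht.2.le.trans hT₂.2⟩, hle⟩).not_gt ht.1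

namespace IsPrimitiveOnIci

variable {s w : ℝ → ℝ} {c q : ℝ}

/-- Otherwise `s` would cross the band between `max c (s t₂)` and `min (s t₁) q` downwards, and
inside that band it cannot decrease. -/
theorem min_le_of_drift_nonneg (hs : IsPrimitiveOnIci s w) (hcq : c < q)
    (hdrift : ∀ᵐ t ∂volume.restrict (Ici 0), s t ∈ Ioo c q → 0 ≤ w t) {t₁ t₂ : ℝ}
    (ht₁ : 0 ≤ t₁) (h : t₁ ≤ t₂) (hc : c < s t₁) : min (s t₁) q ≤ s t₂ := by
  by_contra! hlt
  obtain ⟨T₁, T₂, hT₁, hT, hT₂, hsT₁, hsT₂, hmaps⟩ :=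
    (hs.continuousOn.mono fun t ht => ht₁.trans ht.1).exists_downcrossing h
      (max_lt (lt_min hc hcq) hlt) (min_le_left _ _) (le_max_right c (s t₂))
  have hmono : s T₁ ≤ s T₂ := by
    refine hs.le_of_ae_nonneg (ht₁.trans hT₁) hT.le ?_
    filter_upwards [ae_restrict_of_ae_restrict_of_subset
      (fun t ht => (ht₁.trans hT₁).trans ht.1.le) hdrift, ae_restrict_mem measurableSet_Ioo]
      with t hw ht
    exact hw ⟨(le_max_left _ _).trans_lt (hmaps ht).1, (hmaps ht).2.trans_le (min_le_right _ _)⟩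
  linarith [max_lt (lt_min hc hcq) hlt]

theorem eventually_lt_of_drift (hs : IsPrimitiveOnIci s w) (hcq : c < q) {δ B r : ℝ}
    (hδ : 0 < δ) (hdrift : ∀ᵐ t ∂volume.restrict (Ici 0), s t ∈ Ioo c q → δ ≤ w t)
    (hB : ∀ t, 0 ≤ t → s t ≤ B) (h₀ : c < s 0) (hr : r < q) : ∀ᶠ t in atTop, r < s t := by
  have hdrift₀ : ∀ᵐ t ∂volume.restrict (Ici 0), s t ∈ Ioo c q → 0 ≤ w t :=
    hdrift.mono fun t h hm => hδ.le.trans (h hm)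
  have hc : ∀ t, 0 ≤ t → c < s t := fun t ht =>
    (lt_min h₀ hcq).trans_le (hs.min_le_of_drift_nonneg hcq hdrift₀ le_rfl ht h₀)
  obtain ⟨t₀, ht₀, hrt₀⟩ : ∃ t₀, 0 ≤ t₀ ∧ r < s t₀ := by
    by_contra! hle
    set T := (B - s 0) / δ + 1 with hTdef
    have hT : 0 ≤ T := add_nonneg (div_nonneg (sub_nonneg.2 (hB 0 le_rfl)) hδ.le) zero_le_one
    have hgrowth := hs.mul_sub_le_sub_of_ae_le (δ := δ) le_rfl hT ?_
    · have hδT : δ * (T - 0) = B - s 0 + δ := by rw [hTdef]; field_simp; ring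
      linarith [hB T hT]
    filter_upwards [ae_restrict_of_ae_restrict_of_subset (fun t ht => ht.1.le) hdrift,
      ae_restrict_mem measurableSet_Ioo] with t hw ht
    exact hw ⟨hc t ht.1.le, (hle t ht.1.le).trans_lt hr⟩
  filter_upwards [eventually_ge_atTop t₀] with t ht
  exact (lt_min hrt₀ hr).trans_le (hs.min_le_of_drift_nonneg hcq hdrift₀ ht₀ ht (hc t₀ ht₀))

theorem tendsto_of_drift (hs : IsPrimitiveOnIci s w) {a b δ₁ δ₂ B₀ B₁ : ℝ} (haq : a < q)
    (hqb : q < b) (hδ₁ : 0 < δ₁) (hδ₂ : 0 < δ₂)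
    (hbelow : ∀ᵐ t ∂volume.restrict (Ici 0), s t ∈ Ioo a q → δ₁ ≤ w t)
    (habove : ∀ᵐ t ∂volume.restrict (Ici 0), s t ∈ Ioo q b → w t ≤ -δ₂)
    (hbdd : ∀ t, 0 ≤ t → s t ∈ Icc B₀ B₁) (h₀ : s 0 ∈ Ioo a b) : Tendsto s atTop (𝓝 q) := by
  refine tendsto_order.2 ⟨fun r hr =>
    hs.eventually_lt_of_drift haq hδ₁ hbelow (fun t ht => (hbdd t ht).2) h₀.1 hr, fun r hr => ?_⟩
  have habove' : ∀ᵐ t ∂volume.restrict (Ici 0), -s t ∈ Ioo (-b) (-q) → δ₂ ≤ -w t := by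
    filter_upwards [habove] with t hw hmem
    have := hw ⟨neg_lt_neg_iff.1 hmem.2, neg_lt_neg_iff.1 hmem.1⟩
    linarith
  filter_upwards [hs.neg.eventually_lt_of_drift (neg_lt_neg hqb) hδ₂ habove'
    (fun t ht => neg_le_neg (hbdd t ht).1) (neg_lt_neg h₀.2) (neg_lt_neg hr)] with t ht
  exact neg_lt_neg_iff.1 ht

end IsPrimitiveOnIci

theorem exists_eq_smul_sub_of_mem_segment {E : Type*} [AddCommGroup E] [Module ℝ E]
    {ρ x v : E} (hv : v ∈ segment ℝ (ρ - x) (-x)) : ∃ θ ∈ Icc (0:ℝ) 1, v = θ • ρ - x := by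
  obtain ⟨θ, η, hθ, hη, hθη, rfl⟩ := hv
  obtain rfl : η = 1 - θ := by linarith
  exact ⟨θ, ⟨hθ, by linarith⟩, by module⟩

section Model

variable {p : ℕ} {ρ x v : Vec p} {uA uB : Fin p → Polynomial ℝ}

theorem interior_Xs : interior (Xs ρ) = {x | ∀ i, x i ∈ Ioo 0 (ρ i)} := by
  have hXs : Xs ρ = PiLp.homeomorph 2 (fun _ : Fin p => ℝ) ⁻¹' univ.pi fun i => Icc 0 (ρ i) := by
    ext x
    exact ⟨fun h i _ => h i, fun h i => h i (mem_univ i)⟩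
  rw [hXs, ← Homeomorph.preimage_interior, interior_pi_set finite_univ]
  ext x
  simp only [interior_Icc]
  exact ⟨fun h i => h i (mem_univ i), fun h i _ => h i⟩

theorem Vmap_subset_segment : Vmap ρ uA uB x ⊆ segment ℝ (ρ - x) (-x) := by
  unfold Vmap
  split_ifs
  · exact singleton_subset_iff.2 (left_mem_segment ℝ _ _)
  · exact singleton_subset_iff.2 (right_mem_segment ℝ _ _)
  · exact subset_rfl

theorem Vmap_eq_sub_of_lt (hx : x ∈ interior (Xs ρ)) (h : ubar uB (sigma' x) < ubar uA (sigma' x)) :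
    Vmap ρ uA uB x = {ρ - x} := by
  rw [Vmap, if_pos ⟨hx, h⟩]

theorem Vmap_eq_neg_of_gt (hx : x ∈ interior (Xs ρ)) (h : ubar uA (sigma' x) < ubar uB (sigma' x)) :
    Vmap ρ uA uB x = {-x} := by
  rw [Vmap, if_neg fun h' => h.not_gt h'.2, if_pos ⟨hx, h⟩]

theorem sigma'_sub (x y : Vec p) : sigma' (x - y) = sigma' x - sigma' y := by
  simp [sigma', Finset.sum_sub_distrib]

theorem sigma'_smul (c : ℝ) (x : Vec p) : sigma' (c • x) = c * sigma' x := by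
  simp [sigma', Finset.mul_sum]

theorem sigma'_neg (x : Vec p) : sigma' (-x) = -sigma' x := by
  simp [sigma']

theorem sigma'_mem_Icc_of_mem_Xs (hsum : ∑ i, ρ i = 1) (hx : x ∈ Xs ρ) : sigma' x ∈ Icc 0 1 :=
  ⟨Finset.sum_nonneg fun i _ => (hx i).1, hsum ▸ Finset.sum_le_sum fun i _ => (hx i).2⟩

theorem sub_sigma'_smul_eq_neg (hsum : ∑ i, ρ i = 1) (hv : ∃ θ ∈ Icc (0:ℝ) 1, v = θ • ρ - x) :
    v - sigma' v • ρ = -(x - sigma' x • ρ) := by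
  obtain ⟨θ, -, rfl⟩ := hv
  rw [sigma'_sub, sigma'_smul, show sigma' ρ = 1 from hsum]
  module

theorem IsPrimitiveOnIci.map_sigma' {x v : ℝ → Vec p} (hx : IsPrimitiveOnIci x v) :
    IsPrimitiveOnIci (fun t => sigma' (x t)) (fun t => sigma' (v t)) := by
  simpa [sigma'] using hx.map (∑ i, EuclideanSpace.proj i : Vec p →L[ℝ] ℝ)

theorem IsPrimitiveOnIci.mapsTo_interior_Xs {x v : ℝ → Vec p} (hx : IsPrimitiveOnIci x v)
    (hρ : ∀ i, 0 ≤ ρ i) (hv : ∀ᵐ t ∂volume.restrict (Ici 0), ∃ θ ∈ Icc (0:ℝ) 1, v t = θ • ρ - x t)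
    (h₀ : x 0 ∈ interior (Xs ρ)) : MapsTo x (Ici 0) (interior (Xs ρ)) := by
  simp only [interior_Xs, MapsTo] at h₀ ⊢
  intro t ht i
  have hxi : IsPrimitiveOnIci (fun t => x t i) (fun t => v t i) := hx.map (EuclideanSpace.proj i)
  have hbounds : ∀ᵐ τ ∂volume.restrict (Ici 0), -x τ i ≤ v τ i ∧ v τ i ≤ ρ i - x τ i := by
    filter_upwards [hv] with τ ⟨θ, hθ, hvτ⟩
    simp only [hvτ, PiLp.sub_apply, PiLp.smul_apply, smul_eq_mul]
    constructor <;> nlinarith [hθ.1, hθ.2, hρ i]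
  refine ⟨hxi.pos_of_neg_le (hbounds.mono fun _ h => h.1) (h₀ i).1 ht, ?_⟩
  exact sub_pos.1 <| (hxi.const_sub (ρ i)).pos_of_neg_le
    (hbounds.mono fun _ h => by linarith [h.2]) (sub_pos.2 (h₀ i).2) ht

end Model

theorem population_convergence_to_interior_attractor_general
    {p : ℕ} (ρ : Vec p) (hρ : ∀ i, 0 < ρ i) (hsum : ∑ i, ρ i = 1)
    (uA uB : Fin p → Polynomial ℝ)
    (a q b : ℝ) (ha : 0 ≤ a) (hb : b ≤ 1) (haq : a < q) (hqb : q < b)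
    (hleft : ∀ y ∈ Set.Ioo a q, ubar uB y < ubar uA y)
    (hright : ∀ y ∈ Set.Ioo q b, ubar uA y < ubar uB y) :
    ∀ x : ℝ → Vec p, IsPopSol ρ uA uB x → x 0 ∈ interior (Xs ρ) →
      sigma' (x 0) ∈ Set.Ioo a b →
      Filter.Tendsto x Filter.atTop (nhds (q • ρ)) := by
  intro x ⟨hXs, v, hv, hint, heq⟩ hx₀ hσ₀
  have hx : IsPrimitiveOnIci x v := ⟨hint, heq⟩
  have hθ := hv.mono fun t ht => exists_eq_smul_sub_of_mem_segment (Vmap_subset_segment ht)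
  have hinterior := hx.mapsTo_interior_Xs (fun i => (hρ i).le) hθ hx₀
  have hσ : Tendsto (fun t => sigma' (x t)) atTop (𝓝 q) := by
    refine hx.map_sigma'.tendsto_of_drift haq hqb (δ₁ := 1 - q) (δ₂ := q) (by linarith)
      (by linarith) ?_ ?_ (fun t ht => sigma'_mem_Icc_of_mem_Xs hsum (hXs t ht)) hσ₀
    · filter_upwards [hv, ae_restrict_mem measurableSet_Ici] with t hvt ht hmem
      rw [Vmap_eq_sub_of_lt (hinterior ht) (hleft _ hmem), mem_singleton_iff] at hvt
      rw [hvt, sigma'_sub, show sigma' ρ = 1 from hsum]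
      linarith [hmem.2]
    · filter_upwards [hv, ae_restrict_mem measurableSet_Ici] with t hvt ht hmem
      rw [Vmap_eq_neg_of_gt (hinterior ht) (hright _ hmem), mem_singleton_iff] at hvt
      rw [hvt, sigma'_neg]
      linarith [hmem.1]
  have hdecay := (hx.sub (hx.map_sigma'.smul_const ρ)).eqOn_exp_neg_smul
    (hθ.mono fun t ht => sub_sigma'_smul_eq_neg hsum ht)
  have hlim := (hσ.smul_const ρ).add (tendsto_exp_neg_atTop_nhds_zero.smul_const
    (x 0 - sigma' (x 0) • ρ))
  rw [zero_smul, add_zero] at hlim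
  refine hlim.congr' ?_
  filter_upwards [eventually_ge_atTop 0] with t ht
  simp only [← hdecay ht, add_sub_cancel]

theorem population_convergence_to_interior_attractor
    {p : ℕ} (hp : 0 < p) (ρ : Vec p) (hρ : ∀ i, 0 < ρ i) (hsum : ∑ i, ρ i = 1)
    (uA uB : Fin p → Polynomial ℝ)
    (a q b : ℝ) (ha : 0 ≤ a) (hb : b ≤ 1) (haq : a < q) (hqb : q < b)
    (hleft : ∀ y ∈ Set.Ioo a q, ubar uB y < ubar uA y)
    (hright : ∀ y ∈ Set.Ioo q b, ubar uA y < ubar uB y) :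
    ∀ x : ℝ → Vec p, IsPopSol ρ uA uB x → x 0 ∈ interior (Xs ρ) →
      sigma' (x 0) ∈ Set.Ioo a b →
      Filter.Tendsto x Filter.atTop (nhds (q • ρ)) :=
  population_convergence_to_interior_attractor_general ρ hρ hsum uA uB a q b ha hb haq hqb hleft
    hright
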